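/- Suppose the smooth functions α̃⁽⁺²⁾, α̃⁽⁻²⁾, F⁽⁺²⁾, F⁽⁻²⁾ on Ω satisfy the inhomogeneous Teukolsky equations 𝔗⁽±²⁾α̃⁽±²⁾ = F⁽±²⁾. Define the Chandrasekhar transformations ψ⁽⁺²⁾ = w⁻¹L̲α̃⁽⁺²⁾, Ψ⁽⁺²⁾ = w⁻¹L̲ψ⁽⁺²⁾, ψ⁽⁻²⁾ = w⁻¹Lα̃⁽⁻²⁾, Ψ⁽⁻²⁾ = w⁻¹Lψ⁽⁻²⁾. Then Ψ⁽⁺²⁾ and Ψ⁽⁻²⁾ satisfy the inhomogeneous Regge–Wheeler equations 𝕽⁽⁺²⁾Ψ⁽⁺²⁾ = L̲(w⁻¹ L̲(w⁻¹F⁽⁺²⁾)) and 𝕽⁽⁻²⁾Ψ⁽⁻²⁾ = L(w⁻¹ L(w⁻¹F⁽⁻²⁾)) on Ω. In particular, if F⁽±²⁾ = 0 then 𝕽⁽±²⁾Ψ⁽±²⁾ = 0. -/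

import Mathlib

/-!
On `Ω` all functions involved are smooth, so coordinate derivatives commute. Hence `L` and `L̲`
commute (their coefficients depend on `r` only), `L̲` commutes with `𝓛⁽⁺²⁾` (whose coefficients
depend on `ϑ` only), `𝓛⁽⁺²⁾` commutes with multiplication by functions of `r`, and
`L(w f) = w L f + w′ f`. Writing `L̲α̃ = wψ` and `L̲ψ = wΨ`, the equation `𝔗⁽⁺²⁾α̃ = F` divided by
`w` becomes a first-order identity for `ψ`; applying `w⁻¹L̲` and then `L̲`, the terms in `α̃`
and `ψ` cancel and what is left is `𝕽⁽⁺²⁾Ψ`.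

The reflection `(t, φ) ↦ (−t, −φ)` turns `L` into `−L̲` and `𝓛⁽⁻²⁾` into `𝓛⁽⁺²⁾`, so it exchanges
the two Teukolsky equations and the two Regge–Wheeler equations: the spin `−2` case follows from
the spin `+2` case.
-/

/- Schwarzschild-Anti-de Sitter background: basic operators on functions
   u(t, r, ϑ, φ) with values in ℂ. -/

noncomputable section

open Filter Topology Set

namespace Grav

abbrev F4 : Type := ℝ → ℝ → ℝ → ℝ → ℂ

/-- `Δ(r) = r² + k²r⁴ − 2Mr`. -/
def Del (M k r : ℝ) : ℝ := r ^ 2 + k ^ 2 * r ^ 4 - 2 * M * r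

/-- `∂ₜ`. -/
def dT (u : F4) : F4 := fun t r ϑ φ => deriv (fun s => u s r ϑ φ) t
/-- `∂ᵣ`. -/
def dR (u : F4) : F4 := fun t r ϑ φ => deriv (fun s => u t s ϑ φ) r
/-- `∂_ϑ`. -/
def dTh (u : F4) : F4 := fun t r ϑ φ => deriv (fun s => u t r s φ) ϑ
/-- `∂_φ`. -/
def dPh (u : F4) : F4 := fun t r ϑ φ => deriv (fun s => u t r ϑ s) φ

/-- `L u = ∂ₜ u + (Δ/r²) ∂ᵣ u`. -/
def opL (M k : ℝ) (u : F4) : F4 := fun t r ϑ φ =>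
  dT u t r ϑ φ + ((Del M k r / r ^ 2 : ℝ) : ℂ) * dR u t r ϑ φ

/-- `L̲ u = ∂ₜ u − (Δ/r²) ∂ᵣ u`. -/
def opLb (M k : ℝ) (u : F4) : F4 := fun t r ϑ φ =>
  dT u t r ϑ φ - ((Del M k r / r ^ 2 : ℝ) : ℂ) * dR u t r ϑ φ

/-- `w = Δ/r⁴`. -/
def ww (M k r : ℝ) : ℝ := Del M k r / r ^ 4
/-- `w′ = w·(6M − 2r)/r²`. -/
def wwP (M k r : ℝ) : ℝ := ww M k r * (6 * M - 2 * r) / r ^ 2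

/-- The angular operator `𝓛⁽⁺²⁾`. -/
def angP (u : F4) : F4 := fun t r ϑ φ =>
  -(Real.sin ϑ : ℂ)⁻¹ * deriv (fun x => (Real.sin x : ℂ) * dTh u t r x φ) ϑ
  - (((Real.sin ϑ) ^ 2 : ℝ) : ℂ)⁻¹ * dPh (dPh u) t r ϑ φ
  - 4 * Complex.I * ((Real.cos ϑ / (Real.sin ϑ) ^ 2 : ℝ) : ℂ) * dPh u t r ϑ φ
  + 4 * (((Real.cos ϑ / Real.sin ϑ) ^ 2 : ℝ) : ℂ) * u t r ϑ φ
  + 4 * u t r ϑ φ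

/-- The angular operator `𝓛⁽⁻²⁾`. -/
def angM (u : F4) : F4 := fun t r ϑ φ =>
  -(Real.sin ϑ : ℂ)⁻¹ * deriv (fun x => (Real.sin x : ℂ) * dTh u t r x φ) ϑ
  - (((Real.sin ϑ) ^ 2 : ℝ) : ℂ)⁻¹ * dPh (dPh u) t r ϑ φ
  + 4 * Complex.I * ((Real.cos ϑ / (Real.sin ϑ) ^ 2 : ℝ) : ℂ) * dPh u t r ϑ φ
  + 4 * (((Real.cos ϑ / Real.sin ϑ) ^ 2 : ℝ) : ℂ) * u t r ϑ φ
  + 4 * u t r ϑ φ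

/-- The Teukolsky operator `𝔗⁽⁺²⁾u = −LL̲u + 2(w′/w)L̲u − w(𝓛⁽⁺²⁾ − 2 + 6M/r)u`. -/
def Tp (M k : ℝ) (u : F4) : F4 := fun t r ϑ φ =>
  - opL M k (opLb M k u) t r ϑ φ
  + 2 * ((wwP M k r / ww M k r : ℝ) : ℂ) * opLb M k u t r ϑ φ
  - ((ww M k r : ℝ) : ℂ) *
      (angP u t r ϑ φ - 2 * u t r ϑ φ + ((6 * M / r : ℝ) : ℂ) * u t r ϑ φ)

/-- The Teukolsky operator `𝔗⁽⁻²⁾u = −LL̲u − 2(w′/w)Lu − w(𝓛⁽⁻²⁾ − 2 + 6M/r)u`. -/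
def Tm (M k : ℝ) (u : F4) : F4 := fun t r ϑ φ =>
  - opL M k (opLb M k u) t r ϑ φ
  - 2 * ((wwP M k r / ww M k r : ℝ) : ℂ) * opL M k u t r ϑ φ
  - ((ww M k r : ℝ) : ℂ) *
      (angM u t r ϑ φ - 2 * u t r ϑ φ + ((6 * M / r : ℝ) : ℂ) * u t r ϑ φ)

/-- The Regge–Wheeler operator `𝕽⁽⁺²⁾u = −LL̲u − w(𝓛⁽⁺²⁾ − 6M/r)u`. -/
def RWp (M k : ℝ) (u : F4) : F4 := fun t r ϑ φ =>
  - opL M k (opLb M k u) t r ϑ φ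
  - ((ww M k r : ℝ) : ℂ) * (angP u t r ϑ φ - ((6 * M / r : ℝ) : ℂ) * u t r ϑ φ)

/-- The Regge–Wheeler operator `𝕽⁽⁻²⁾u = −LL̲u − w(𝓛⁽⁻²⁾ − 6M/r)u`. -/
def RWm (M k : ℝ) (u : F4) : F4 := fun t r ϑ φ =>
  - opL M k (opLb M k u) t r ϑ φ
  - ((ww M k r : ℝ) : ℂ) * (angM u t r ϑ φ - ((6 * M / r : ℝ) : ℂ) * u t r ϑ φ)

/-- The exterior region `Ω = {r > r₊, 0 < ϑ < π}` (as a subset of ℝ⁴). -/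
def OmSet (rp : ℝ) : Set (ℝ × ℝ × ℝ × ℝ) :=
  {p | rp < p.2.1 ∧ 0 < p.2.2.1 ∧ p.2.2.1 < Real.pi}

/-- `u` is smooth on `Ω`. -/
def SmoothOnOm (rp : ℝ) (u : F4) : Prop :=
  ContDiffOn ℝ (⊤ : ℕ∞)
    (fun p : ℝ × ℝ × ℝ × ℝ => u p.1 p.2.1 p.2.2.1 p.2.2.2) (OmSet rp)

/-- Multiplication by `w⁻¹`. -/
def winv (M k : ℝ) (u : F4) : F4 := fun t r ϑ φ => ((ww M k r : ℝ) : ℂ)⁻¹ * u t r ϑ φ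
/-- Multiplication by `w`. -/
def wmul (M k : ℝ) (u : F4) : F4 := fun t r ϑ φ => ((ww M k r : ℝ) : ℂ) * u t r ϑ φ
/-- Pointwise complex conjugation. -/
def conjF (u : F4) : F4 := fun t r ϑ φ => (starRingEnd ℂ) (u t r ϑ φ)

/-- `𝓛⁽⁺²⁾(𝓛⁽⁺²⁾ − 2)`. -/
def angSqP (u : F4) : F4 := angP (fun t r ϑ φ => angP u t r ϑ φ - 2 * u t r ϑ φ)
/-- `𝓛⁽⁻²⁾(𝓛⁽⁻²⁾ − 2)`. -/
def angSqM (u : F4) : F4 := angM (fun t r ϑ φ => angM u t r ϑ φ - 2 * u t r ϑ φ)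

/-- `𝓛⁽⁺²⁾(𝓛⁽⁺²⁾ − 2) + 12M∂ₜ`. -/
def TSp (M : ℝ) (u : F4) : F4 := fun t r ϑ φ =>
  angSqP u t r ϑ φ + 12 * (M : ℂ) * dT u t r ϑ φ
/-- `𝓛⁽⁻²⁾(𝓛⁽⁻²⁾ − 2) − 12M∂ₜ`. -/
def TSm (M : ℝ) (u : F4) : F4 := fun t r ϑ φ =>
  angSqM u t r ϑ φ - 12 * (M : ℂ) * dT u t r ϑ φ


def uncurry4 (u : F4) (p : ℝ × ℝ × ℝ × ℝ) : ℂ := u p.1 p.2.1 p.2.2.1 p.2.2.2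

def EqOnOm (rp : ℝ) (f g : F4) : Prop :=
  ∀ t r ϑ φ : ℝ, (t, r, ϑ, φ) ∈ OmSet rp → f t r ϑ φ = g t r ϑ φ

def dDir (v : ℝ × ℝ × ℝ × ℝ) (u : F4) : F4 := fun t r ϑ φ =>
  lineDeriv ℝ (uncurry4 u) (t, r, ϑ, φ) v

@[fun_prop]
lemma contDiff_ofReal {n : WithTop ℕ∞} : ContDiff ℝ n (fun x : ℝ => (x : ℂ)) :=
  Complex.ofRealCLM.contDiff

variable {rp M k : ℝ} {u f g : F4} {t r ϑ φ : ℝ}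

lemma dT_eq_dDir (u : F4) : dT u = dDir (1, 0, 0, 0) u := by
  ext t r ϑ φ
  simpa [dDir, lineDeriv, uncurry4, dT] using (deriv_comp_const_add (fun s => u s r ϑ φ) t 0).symm

lemma dR_eq_dDir (u : F4) : dR u = dDir (0, 1, 0, 0) u := by
  ext t r ϑ φ
  simpa [dDir, lineDeriv, uncurry4, dR] using (deriv_comp_const_add (fun s => u t s ϑ φ) r 0).symm

lemma dTh_eq_dDir (u : F4) : dTh u = dDir (0, 0, 1, 0) u := by
  ext t r ϑ φ
  simpa [dDir, lineDeriv, uncurry4, dTh] using (deriv_comp_const_add (fun s => u t r s φ) ϑ 0).symm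

lemma dPh_eq_dDir (u : F4) : dPh u = dDir (0, 0, 0, 1) u := by
  ext t r ϑ φ
  simpa [dDir, lineDeriv, uncurry4, dPh] using (deriv_comp_const_add (fun s => u t r ϑ s) φ 0).symm

lemma dDir_tr_apply (a b : ℝ) (u : F4) (t r ϑ φ : ℝ) :
    dDir (a, b, 0, 0) u t r ϑ φ = deriv (fun s => u (t + s * a) (r + s * b) ϑ φ) 0 := by
  simp [dDir, lineDeriv, uncurry4]

lemma isOpen_omSet (rp : ℝ) : IsOpen (OmSet rp) :=
  (isOpen_lt (by fun_prop) (by fun_prop)).and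
    ((isOpen_lt (by fun_prop) (by fun_prop)).and (isOpen_lt (by fun_prop) (by fun_prop)))

lemma SmoothOnOm.differentiableAt (hu : SmoothOnOm rp u) {p : ℝ × ℝ × ℝ × ℝ}
    (hp : p ∈ OmSet rp) : DifferentiableAt ℝ (uncurry4 u) p :=
  (hu.contDiffAt ((isOpen_omSet rp).mem_nhds hp)).differentiableAt (by simp)

lemma SmoothOnOm.hasDerivAt_dT (hu : SmoothOnOm rp u) (hp : (t, r, ϑ, φ) ∈ OmSet rp) :
    HasDerivAt (fun s => u s r ϑ φ) (dT u t r ϑ φ) t :=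
  ((hu.differentiableAt hp).comp (f := fun s : ℝ => (s, r, ϑ, φ)) t (by fun_prop)).hasDerivAt

lemma SmoothOnOm.hasDerivAt_dR (hu : SmoothOnOm rp u) (hp : (t, r, ϑ, φ) ∈ OmSet rp) :
    HasDerivAt (fun s => u t s ϑ φ) (dR u t r ϑ φ) r :=
  ((hu.differentiableAt hp).comp (f := fun s : ℝ => (t, s, ϑ, φ)) r (by fun_prop)).hasDerivAt

lemma SmoothOnOm.hasDerivAt_dDir (hu : SmoothOnOm rp u) (hp : (t, r, ϑ, φ) ∈ OmSet rp)
    (a b : ℝ) :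
    HasDerivAt (fun s => u (t + s * a) (r + s * b) ϑ φ) (dDir (a, b, 0, 0) u t r ϑ φ) 0 := by
  have hline : DifferentiableAt ℝ (fun s : ℝ => (t + s * a, r + s * b, ϑ, φ)) 0 := by fun_prop
  rw [dDir_tr_apply]
  exact ((hu.differentiableAt (by simpa using hp)).comp (0 : ℝ) hline).hasDerivAt

lemma SmoothOnOm.contDiffOn_fderiv (hu : SmoothOnOm rp u) :
    ContDiffOn ℝ (⊤ : ℕ∞) (fderiv ℝ (uncurry4 u)) (OmSet rp) :=
  hu.fderiv_of_isOpen (m := (⊤ : ℕ∞)) (isOpen_omSet rp) (by exact_mod_cast le_top)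

lemma SmoothOnOm.dDir (hu : SmoothOnOm rp u) (v : ℝ × ℝ × ℝ × ℝ) :
    SmoothOnOm rp (dDir v u) := by
  have h : ContDiffOn ℝ (⊤ : ℕ∞) (fun p => fderiv ℝ (uncurry4 u) p v) (OmSet rp) :=
    (ContinuousLinearMap.apply ℝ ℂ v).contDiff.comp_contDiffOn hu.contDiffOn_fderiv
  exact h.congr fun p hp => (hu.differentiableAt hp).lineDeriv_eq_fderiv

lemma SmoothOnOm.dT (hu : SmoothOnOm rp u) : SmoothOnOm rp (dT u) := by
  rw [dT_eq_dDir]; exact hu.dDir _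
lemma SmoothOnOm.dR (hu : SmoothOnOm rp u) : SmoothOnOm rp (dR u) := by
  rw [dR_eq_dDir]; exact hu.dDir _
lemma SmoothOnOm.dTh (hu : SmoothOnOm rp u) : SmoothOnOm rp (dTh u) := by
  rw [dTh_eq_dDir]; exact hu.dDir _
lemma SmoothOnOm.dPh (hu : SmoothOnOm rp u) : SmoothOnOm rp (dPh u) := by
  rw [dPh_eq_dDir]; exact hu.dDir _

lemma dDir_congr (h : EqOnOm rp f g) (hp : (t, r, ϑ, φ) ∈ OmSet rp) (v : ℝ × ℝ × ℝ × ℝ) :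
    dDir v f t r ϑ φ = dDir v g t r ϑ φ := by
  refine Filter.EventuallyEq.lineDeriv_eq ?_
  filter_upwards [(isOpen_omSet rp).mem_nhds hp] with ⟨t', r', ϑ', φ'⟩ hq
  exact h t' r' ϑ' φ' hq

lemma dDir_dDir (hu : SmoothOnOm rp u) (hp : (t, r, ϑ, φ) ∈ OmSet rp)
    (v w : ℝ × ℝ × ℝ × ℝ) :
    dDir v (dDir w u) t r ϑ φ = fderiv ℝ (fderiv ℝ (uncurry4 u)) (t, r, ϑ, φ) v w := by
  have hnhds := (isOpen_omSet rp).mem_nhds hp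
  have hfd : DifferentiableAt ℝ (fderiv ℝ (uncurry4 u)) (t, r, ϑ, φ) :=
    (hu.contDiffOn_fderiv.contDiffAt hnhds).differentiableAt (by simp)
  have hev : uncurry4 (dDir w u) =ᶠ[𝓝 (t, r, ϑ, φ)] fun q => fderiv ℝ (uncurry4 u) q w := by
    filter_upwards [hnhds] with q hq
    exact (hu.differentiableAt hq).lineDeriv_eq_fderiv
  have happ := hfd.hasFDerivAt.clm_apply (hasFDerivAt_const w (t, r, ϑ, φ))
  rw [dDir, hev.lineDeriv_eq, happ.differentiableAt.lineDeriv_eq_fderiv, happ.fderiv]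
  simp

lemma dDir_comm (hu : SmoothOnOm rp u) (hp : (t, r, ϑ, φ) ∈ OmSet rp)
    (v w : ℝ × ℝ × ℝ × ℝ) :
    dDir v (dDir w u) t r ϑ φ = dDir w (dDir v u) t r ϑ φ := by
  have hU : ContDiffAt ℝ (⊤ : ℕ∞) (uncurry4 u) (t, r, ϑ, φ) :=
    hu.contDiffAt ((isOpen_omSet rp).mem_nhds hp)
  rw [dDir_dDir hu hp, dDir_dDir hu hp, hU.isSymmSndFDerivAt (by simpa using ENat.LEInfty.out)]

lemma opL_eq_of_hasDerivAt {ft fr : ℂ} (ht : HasDerivAt (fun s => f s r ϑ φ) ft t)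
    (hr : HasDerivAt (fun s => f t s ϑ φ) fr r) :
    opL M k f t r ϑ φ = ft + ((Del M k r / r ^ 2 : ℝ) : ℂ) * fr := by
  simp only [opL, dT, dR, ht.deriv, hr.deriv]

lemma opLb_eq_of_hasDerivAt {ft fr : ℂ} (ht : HasDerivAt (fun s => f s r ϑ φ) ft t)
    (hr : HasDerivAt (fun s => f t s ϑ φ) fr r) :
    opLb M k f t r ϑ φ = ft - ((Del M k r / r ^ 2 : ℝ) : ℂ) * fr := by
  simp only [opLb, dT, dR, ht.deriv, hr.deriv]

lemma opL_congr (h : EqOnOm rp f g) (hp : (t, r, ϑ, φ) ∈ OmSet rp) :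
    opL M k f t r ϑ φ = opL M k g t r ϑ φ := by
  simp only [opL, dT_eq_dDir, dR_eq_dDir, dDir_congr h hp]

lemma opLb_congr (h : EqOnOm rp f g) (hp : (t, r, ϑ, φ) ∈ OmSet rp) :
    opLb M k f t r ϑ φ = opLb M k g t r ϑ φ := by
  simp only [opLb, dT_eq_dDir, dR_eq_dDir, dDir_congr h hp]

lemma opLb_eq_dDir (hu : SmoothOnOm rp u) (hp : (t, r, ϑ, φ) ∈ OmSet rp) :
    opLb M k u t r ϑ φ = dDir (1, -(Del M k r / r ^ 2), 0, 0) u t r ϑ φ := by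
  have hv : ((1 : ℝ), -(Del M k r / r ^ 2), (0 : ℝ), (0 : ℝ))
      = (1, 0, 0, 0) - (Del M k r / r ^ 2) • (0, 1, 0, 0) := by
    ext <;> simp
  simp only [opLb, dT_eq_dDir, dR_eq_dDir, dDir, (hu.differentiableAt hp).lineDeriv_eq_fderiv,
    hv, map_sub, map_smul, Complex.real_smul]

lemma SmoothOnOm.mul_radial {c : ℝ → ℂ} (hc : ∀ r, rp < r → ContDiffAt ℝ (⊤ : ℕ∞) c r)
    (hu : SmoothOnOm rp u) : SmoothOnOm rp (fun t r ϑ φ => c r * u t r ϑ φ) :=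
  ContDiffOn.mul (fun p hp => ((hc _ hp.1).comp p (by fun_prop)).contDiffWithinAt) hu

lemma SmoothOnOm.mul_polar {c : ℝ → ℂ}
    (hc : ∀ ϑ, 0 < ϑ → ϑ < Real.pi → ContDiffAt ℝ (⊤ : ℕ∞) c ϑ)
    (hu : SmoothOnOm rp u) : SmoothOnOm rp (fun t r ϑ φ => c ϑ * u t r ϑ φ) :=
  ContDiffOn.mul (fun p hp => ((hc _ hp.2.1 hp.2.2).comp p (by fun_prop)).contDiffWithinAt) hu

lemma contDiffAt_Del_div_sq (hr : r ≠ 0) :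
    ContDiffAt ℝ (⊤ : ℕ∞) (fun s => ((Del M k s / s ^ 2 : ℝ) : ℂ)) r := by
  unfold Del; fun_prop (disch := positivity)

lemma SmoothOnOm.opL (hrp : 0 < rp) (hu : SmoothOnOm rp u) : SmoothOnOm rp (opL M k u) :=
  ContDiffOn.add hu.dT <| hu.dR.mul_radial (c := fun s => ((Del M k s / s ^ 2 : ℝ) : ℂ))
    fun _ hr => contDiffAt_Del_div_sq (hrp.trans hr).ne'

lemma SmoothOnOm.opLb (hrp : 0 < rp) (hu : SmoothOnOm rp u) : SmoothOnOm rp (opLb M k u) :=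
  ContDiffOn.sub hu.dT <| hu.dR.mul_radial (c := fun s => ((Del M k s / s ^ 2 : ℝ) : ℂ))
    fun _ hr => contDiffAt_Del_div_sq (hrp.trans hr).ne'

lemma Del_pos (hrp : 0 < rp) (hroot : rp + k ^ 2 * rp ^ 3 - 2 * M = 0) (hr : rp < r) :
    0 < Del M k r := by
  have hr0 : 0 < r := hrp.trans hr
  have hcube : rp ^ 3 < r ^ 3 := pow_lt_pow_left₀ hr hrp.le (by norm_num)
  have : Del M k r = r * ((r - rp) + k ^ 2 * (r ^ 3 - rp ^ 3)) := by
    unfold Del; linear_combination r * hroot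
  rw [this]
  have : 0 ≤ k ^ 2 * (r ^ 3 - rp ^ 3) := by
    have := sub_pos.2 hcube; positivity
  have := sub_pos.2 hr
  positivity

lemma ww_pos (hrp : 0 < rp) (hroot : rp + k ^ 2 * rp ^ 3 - 2 * M = 0) (hr : rp < r) :
    0 < ww M k r :=
  div_pos (Del_pos hrp hroot hr) (by have := hrp.trans hr; positivity)

lemma SmoothOnOm.winv (hrp : 0 < rp) (hroot : rp + k ^ 2 * rp ^ 3 - 2 * M = 0)
    (hu : SmoothOnOm rp u) : SmoothOnOm rp (winv M k u) :=
  hu.mul_radial fun r hr => by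
    have : r ≠ 0 := (hrp.trans hr).ne'
    have hw : ContDiffAt ℝ (⊤ : ℕ∞) (ww M k) r := by
      unfold ww Del; fun_prop (disch := positivity)
    exact (contDiff_ofReal.contDiffAt.comp r hw).inv
      (by simpa using (ww_pos hrp hroot hr).ne')

lemma opL_opLb_comm (hrp : 0 < rp) (hu : SmoothOnOm rp u) (hp : (t, r, ϑ, φ) ∈ OmSet rp) :
    opL M k (opLb M k u) t r ϑ φ = opLb M k (opL M k u) t r ϑ φ := by
  have hr : rp < r := hp.1
  have ha := ((contDiffAt_Del_div_sq (M := M) (k := k) (hrp.trans hr).ne').differentiableAt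
    (by simp)).hasDerivAt
  have hTT := hu.dT.hasDerivAt_dT hp
  have hRT := hu.dT.hasDerivAt_dR hp
  have hTR := hu.dR.hasDerivAt_dT hp
  have hRR := hu.dR.hasDerivAt_dR hp
  rw [opL_eq_of_hasDerivAt (f := opLb M k u) (hTT.sub (hTR.const_mul _)) (hRT.sub (ha.mul hRR)),
    opLb_eq_of_hasDerivAt (f := opL M k u) (hTT.add (hTR.const_mul _)) (hRT.add (ha.mul hRR))]
  have hcomm : dT (dR u) t r ϑ φ = dR (dT u) t r ϑ φ := by
    simp only [dT_eq_dDir, dR_eq_dDir]; exact dDir_comm hu hp _ _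
  linear_combination (-2 * ((Del M k r / r ^ 2 : ℝ) : ℂ)) * hcomm

lemma hasDerivAt_ww (hr : r ≠ 0) : HasDerivAt (ww M k) ((6 * M - 2 * r) / r ^ 4) r := by
  have h := (((hasDerivAt_pow 2 r).add ((hasDerivAt_pow 4 r).const_mul (k ^ 2))).sub
    ((hasDerivAt_id r).const_mul (2 * M))).div (hasDerivAt_pow 4 r) (by positivity)
  exact h.congr_deriv (by norm_num; field_simp; ring)

lemma opL_wmul (hrp : 0 < rp) (hu : SmoothOnOm rp u) (hp : (t, r, ϑ, φ) ∈ OmSet rp) :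
    opL M k (wmul M k u) t r ϑ φ
      = ww M k r * opL M k u t r ϑ φ + wwP M k r * u t r ϑ φ := by
  have hr : rp < r := hp.1
  have hw := (hasDerivAt_ww (M := M) (k := k) (hrp.trans hr).ne').ofReal_comp
  rw [opL_eq_of_hasDerivAt (f := wmul M k u) ((hu.hasDerivAt_dT hp).const_mul _)
    (hw.mul (hu.hasDerivAt_dR hp))]
  have hwP : ((Del M k r / r ^ 2 : ℝ) : ℂ) * (((6 * M - 2 * r) / r ^ 4 : ℝ) : ℂ) = wwP M k r := by
    norm_cast; unfold wwP ww; ring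
  simp only [opL]
  linear_combination u t r ϑ φ * hwP

def sinDTh (u : F4) : F4 := fun t r ϑ φ => (Real.sin ϑ : ℂ) * dTh u t r ϑ φ

lemma SmoothOnOm.sinDTh (hu : SmoothOnOm rp u) : SmoothOnOm rp (sinDTh u) :=
  hu.dTh.mul_polar (c := fun ϑ => (Real.sin ϑ : ℂ)) fun _ _ _ => by fun_prop

lemma SmoothOnOm.angP (hu : SmoothOnOm rp u) : SmoothOnOm rp (angP u) := by
  refine ContDiffOn.add (ContDiffOn.add (ContDiffOn.sub (ContDiffOn.sub
    (hu.sinDTh.dTh.mul_polar (c := fun ϑ => -(Real.sin ϑ : ℂ)⁻¹) ?_)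
    (hu.dPh.dPh.mul_polar (c := fun ϑ => (((Real.sin ϑ) ^ 2 : ℝ) : ℂ)⁻¹) ?_))
    (hu.dPh.mul_polar
      (c := fun ϑ => 4 * Complex.I * ((Real.cos ϑ / (Real.sin ϑ) ^ 2 : ℝ) : ℂ)) ?_))
    (hu.mul_polar (c := fun ϑ => 4 * (((Real.cos ϑ / Real.sin ϑ) ^ 2 : ℝ) : ℂ)) ?_))
    (contDiffOn_const.mul hu)
  all_goals
    intro ϑ h0 hπ
    have := (Real.sin_pos_of_pos_of_lt_pi h0 hπ).ne'
    fun_prop (disch := first | exact_mod_cast this | exact_mod_cast pow_ne_zero 2 this)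

lemma angP_radial_mul (c : ℝ → ℂ) (u : F4) (t r ϑ φ : ℝ) :
    angP (fun t r ϑ φ => c r * u t r ϑ φ) t r ϑ φ = c r * angP u t r ϑ φ := by
  have h : ∀ D : ℝ → ℂ, deriv (fun x => (Real.sin x : ℂ) * (c r * D x)) ϑ
      = c r * deriv (fun x => (Real.sin x : ℂ) * D x) ϑ := fun D => by
    simp_rw [mul_left_comm _ (c r)]; exact congrFun (deriv_const_mul_field' _) ϑ
  simp only [angP, dTh, dPh, deriv_const_mul_field', h]
  ring

lemma angP_congr_slice (h : ∀ ϑ' φ', (t, r, ϑ', φ') ∈ OmSet rp → f t r ϑ' φ' = g t r ϑ' φ')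
    (hp : (t, r, ϑ, φ) ∈ OmSet rp) : angP f t r ϑ φ = angP g t r ϑ φ := by
  have hθ : ∀ φ', ∀ x ∈ Ioo 0 Real.pi, dTh f t r x φ' = dTh g t r x φ' := fun φ' x hx =>
    Filter.EventuallyEq.deriv_eq <| by
      filter_upwards [Ioo_mem_nhds hx.1 hx.2] with s hs using h s φ' ⟨hp.1, hs⟩
  have hφ : (fun s => f t r ϑ s) = fun s => g t r ϑ s :=
    funext fun s => h ϑ s ⟨hp.1, hp.2⟩
  have hA : deriv (fun x => (Real.sin x : ℂ) * dTh f t r x φ) ϑ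
      = deriv (fun x => (Real.sin x : ℂ) * dTh g t r x φ) ϑ :=
    Filter.EventuallyEq.deriv_eq <| by
      filter_upwards [Ioo_mem_nhds hp.2.1 hp.2.2] with x hx using by rw [hθ φ x hx]
  simp only [angP, dPh, hA, hφ, h ϑ φ hp]

lemma angP_congr (h : EqOnOm rp f g) (hp : (t, r, ϑ, φ) ∈ OmSet rp) :
    angP f t r ϑ φ = angP g t r ϑ φ :=
  angP_congr_slice (fun ϑ' φ' => h t r ϑ' φ') hp

lemma dDir_sinDTh (hu : SmoothOnOm rp u) (a b : ℝ) :
    EqOnOm rp (dDir (a, b, 0, 0) (sinDTh u)) (sinDTh (dDir (a, b, 0, 0) u)) := by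
  intro t r ϑ φ hp
  rw [dDir_tr_apply]
  simp only [sinDTh, deriv_const_mul_field']
  rw [← dDir_tr_apply, dTh_eq_dDir, dTh_eq_dDir, dDir_comm hu hp]

lemma dDir_angP (hu : SmoothOnOm rp u) (hp : (t, r, ϑ, φ) ∈ OmSet rp) (a b : ℝ) :
    dDir (a, b, 0, 0) (angP u) t r ϑ φ = angP (dDir (a, b, 0, 0) u) t r ϑ φ := by
  set v : ℝ × ℝ × ℝ × ℝ := (a, b, 0, 0)
  have hA : dDir v (dTh (sinDTh u)) t r ϑ φ = dTh (sinDTh (dDir v u)) t r ϑ φ := by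
    rw [dTh_eq_dDir, dTh_eq_dDir, dDir_comm hu.sinDTh hp, dDir_congr (dDir_sinDTh hu a b) hp]
  have hB : dDir v (dPh (dPh u)) t r ϑ φ = dPh (dPh (dDir v u)) t r ϑ φ := by
    have h : EqOnOm rp (dDir v (dPh u)) (dPh (dDir v u)) := fun t r ϑ φ hq => by
      rw [dPh_eq_dDir, dPh_eq_dDir, dDir_comm hu hq]
    rw [dPh_eq_dDir (dPh u), dDir_comm hu.dPh hp, dDir_congr h hp, dPh_eq_dDir (dPh _)]
  have hC : dDir v (dPh u) t r ϑ φ = dPh (dDir v u) t r ϑ φ := by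
    rw [dPh_eq_dDir, dPh_eq_dDir, dDir_comm hu hp]
  have hD : HasDerivAt (fun s => angP u (t + s * a) (r + s * b) ϑ φ) _ 0 :=
    (((((hu.sinDTh.dTh.hasDerivAt_dDir hp a b).const_mul _).sub
      ((hu.dPh.dPh.hasDerivAt_dDir hp a b).const_mul _)).sub
      ((hu.dPh.hasDerivAt_dDir hp a b).const_mul _)).add
      ((hu.hasDerivAt_dDir hp a b).const_mul _)).add ((hu.hasDerivAt_dDir hp a b).const_mul 4)
  rw [dDir_tr_apply, hD.deriv, hA, hB, hC]
  rfl

/-- At the point, `L̲` is the derivative along the constant vector `(1, -Δ/r², 0, 0)`, and it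
stays so on the whole angular slice through the point, where `𝓛⁽⁺²⁾` acts. -/
lemma opLb_angP_comm (hu : SmoothOnOm rp u) (hp : (t, r, ϑ, φ) ∈ OmSet rp) :
    opLb M k (angP u) t r ϑ φ = angP (opLb M k u) t r ϑ φ := by
  rw [opLb_eq_dDir hu.angP hp, dDir_angP hu hp]
  exact angP_congr_slice (fun ϑ' φ' hq => (opLb_eq_dDir hu hq).symm) hp

lemma hasDerivAt_wwP_div_ww (hrp : 0 < rp) (hroot : rp + k ^ 2 * rp ^ 3 - 2 * M = 0)
    (hr : rp < r) :
    HasDerivAt (fun s => wwP M k s / ww M k s) ((2 * r - 12 * M) / r ^ 3) r := by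
  have hev : (fun s => wwP M k s / ww M k s) =ᶠ[𝓝 r] fun s => (6 * M - 2 * s) / s ^ 2 := by
    filter_upwards [eventually_gt_nhds hr] with s hs
    have := (ww_pos hrp hroot hs).ne'
    rw [wwP, mul_div_assoc, mul_div_cancel_left₀ _ this]
  have h := ((hasDerivAt_const r (6 * M)).sub ((hasDerivAt_id r).const_mul 2)).div
    (hasDerivAt_pow 2 r) (by have := hrp.trans hr; positivity)
  refine (h.congr_deriv ?_).congr_of_eventuallyEq hev
  have := (hrp.trans hr).ne'
  norm_num; field_simp; ring

lemma hasDerivAt_const_div (c : ℝ) (hr : r ≠ 0) :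
    HasDerivAt (fun s => c / s) (-c / r ^ 2) r := by
  simpa [div_eq_mul_inv, neg_div] using (hasDerivAt_inv hr).const_mul c

/-- `w⁻¹𝔗⁽⁺²⁾α` rewritten through `ψ = w⁻¹L̲α`. -/
def tpReduced₁ (M k : ℝ) (α ψ : F4) : F4 := fun t r ϑ φ =>
  -opL M k ψ t r ϑ φ + ((wwP M k r / ww M k r : ℝ) : ℂ) * ψ t r ϑ φ
    - angP α t r ϑ φ + 2 * α t r ϑ φ - ((6 * M / r : ℝ) : ℂ) * α t r ϑ φ

/-- `w⁻¹L̲(w⁻¹𝔗⁽⁺²⁾α)` rewritten through `ψ = w⁻¹L̲α` and `Ψ = w⁻¹L̲ψ`. -/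
def tpReduced₂ (M k : ℝ) (α ψ Ψ : F4) : F4 := fun t r ϑ φ =>
  -opL M k Ψ t r ϑ φ + ((6 * M / r : ℝ) : ℂ) * ψ t r ϑ φ - angP ψ t r ϑ φ
    - 6 * M * α t r ϑ φ

variable {α ψ Ψ : F4}

lemma Tp_eq_wmul_tpReduced₁ (hrp : 0 < rp) (hroot : rp + k ^ 2 * rp ^ 3 - 2 * M = 0)
    (hψ : SmoothOnOm rp ψ) (hαψ : EqOnOm rp (opLb M k α) (wmul M k ψ))
    (hp : (t, r, ϑ, φ) ∈ OmSet rp) :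
    Tp M k α t r ϑ φ = wmul M k (tpReduced₁ M k α ψ) t r ϑ φ := by
  have hLLb : opL M k (opLb M k α) t r ϑ φ = ww M k r * opL M k ψ t r ϑ φ + wwP M k r * ψ t r ϑ φ :=
    (opL_congr hαψ hp).trans (opL_wmul hrp hψ hp)
  have hw : ((wwP M k r / ww M k r : ℝ) : ℂ) * ww M k r = wwP M k r := by
    exact_mod_cast div_mul_cancel₀ _ (ww_pos hrp hroot hp.1).ne'
  simp only [Tp, tpReduced₁, wmul, hLLb, hαψ t r ϑ φ hp]
  linear_combination ψ t r ϑ φ * hw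

lemma opLb_tpReduced₁ (hrp : 0 < rp) (hroot : rp + k ^ 2 * rp ^ 3 - 2 * M = 0)
    (hα : SmoothOnOm rp α) (hψ : SmoothOnOm rp ψ) (hΨ : SmoothOnOm rp Ψ)
    (hαψ : EqOnOm rp (opLb M k α) (wmul M k ψ)) (hψΨ : EqOnOm rp (opLb M k ψ) (wmul M k Ψ))
    (hp : (t, r, ϑ, φ) ∈ OmSet rp) :
    opLb M k (tpReduced₁ M k α ψ) t r ϑ φ = wmul M k (tpReduced₂ M k α ψ Ψ) t r ϑ φ := by
  have hr : rp < r := hp.1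
  have hr0 : r ≠ 0 := (hrp.trans hr).ne'
  have hLbL : opLb M k (opL M k ψ) t r ϑ φ
      = ww M k r * opL M k Ψ t r ϑ φ + wwP M k r * Ψ t r ϑ φ :=
    (opL_opLb_comm hrp hψ hp).symm.trans ((opL_congr hψΨ hp).trans (opL_wmul hrp hΨ hp))
  have hLbA : opLb M k (angP α) t r ϑ φ = ww M k r * angP ψ t r ϑ φ :=
    (opLb_angP_comm hα hp).trans ((angP_congr hαψ hp).trans (angP_radial_mul _ _ _ _ _ _))
  have hLbψ := hψΨ t r ϑ φ hp
  have hLbα := hαψ t r ϑ φ hp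
  have hw : ((wwP M k r / ww M k r : ℝ) : ℂ) * ww M k r = wwP M k r := by
    exact_mod_cast div_mul_cancel₀ _ (ww_pos hrp hroot hr).ne'
  have hc : ((Del M k r / r ^ 2 : ℝ) : ℂ) * (((2 * r - 12 * M) / r ^ 3 : ℝ) : ℂ)
      = 2 * ww M k r - 2 * ww M k r * ((6 * M / r : ℝ) : ℂ) := by
    norm_cast; unfold ww; field_simp; ring
  have hm : ((Del M k r / r ^ 2 : ℝ) : ℂ) * ((-(6 * M) / r ^ 2 : ℝ) : ℂ)
      = -(6 * M * ww M k r) := by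
    norm_cast; unfold ww; ring
  have ht : HasDerivAt (fun s => tpReduced₁ M k α ψ s r ϑ φ) _ t :=
    (((((hψ.opL hrp).hasDerivAt_dT hp).neg.add ((hψ.hasDerivAt_dT hp).const_mul _)).sub
      (hα.angP.hasDerivAt_dT hp)).add ((hα.hasDerivAt_dT hp).const_mul 2)).sub
      ((hα.hasDerivAt_dT hp).const_mul _)
  have hr' : HasDerivAt (fun s => tpReduced₁ M k α ψ t s ϑ φ) _ r :=
    (((((hψ.opL hrp).hasDerivAt_dR hp).neg.add
      ((hasDerivAt_wwP_div_ww hrp hroot hr).ofReal_comp.mul (hψ.hasDerivAt_dR hp))).sub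
      (hα.angP.hasDerivAt_dR hp)).add ((hα.hasDerivAt_dR hp).const_mul 2)).sub
      ((hasDerivAt_const_div (6 * M) hr0).ofReal_comp.mul (hα.hasDerivAt_dR hp))
  rw [opLb_eq_of_hasDerivAt ht hr']
  simp only [opLb, wmul, tpReduced₂] at hLbL hLbA hLbψ hLbα ⊢
  linear_combination -hLbL + ((wwP M k r / ww M k r : ℝ) : ℂ) * hLbψ - hLbA
    + (2 - ((6 * M / r : ℝ) : ℂ)) * hLbα - ψ t r ϑ φ * hc + α t r ϑ φ * hm + Ψ t r ϑ φ * hw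

lemma opLb_tpReduced₂ (hrp : 0 < rp)
    (hα : SmoothOnOm rp α) (hψ : SmoothOnOm rp ψ) (hΨ : SmoothOnOm rp Ψ)
    (hαψ : EqOnOm rp (opLb M k α) (wmul M k ψ)) (hψΨ : EqOnOm rp (opLb M k ψ) (wmul M k Ψ))
    (hp : (t, r, ϑ, φ) ∈ OmSet rp) :
    opLb M k (tpReduced₂ M k α ψ Ψ) t r ϑ φ = RWp M k Ψ t r ϑ φ := by
  have hr0 : r ≠ 0 := (hrp.trans hp.1).ne'
  have hLbL := opL_opLb_comm (M := M) (k := k) hrp hΨ hp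
  have hLbA : opLb M k (angP ψ) t r ϑ φ = ww M k r * angP Ψ t r ϑ φ :=
    (opLb_angP_comm hψ hp).trans ((angP_congr hψΨ hp).trans (angP_radial_mul _ _ _ _ _ _))
  have hLbψ := hψΨ t r ϑ φ hp
  have hLbα := hαψ t r ϑ φ hp
  have hm : ((Del M k r / r ^ 2 : ℝ) : ℂ) * ((-(6 * M) / r ^ 2 : ℝ) : ℂ)
      = -(6 * M * ww M k r) := by
    norm_cast; unfold ww; ring
  have ht : HasDerivAt (fun s => tpReduced₂ M k α ψ Ψ s r ϑ φ) _ t :=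
    ((((hΨ.opL hrp).hasDerivAt_dT hp).neg.add ((hψ.hasDerivAt_dT hp).const_mul _)).sub
      (hψ.angP.hasDerivAt_dT hp)).sub ((hα.hasDerivAt_dT hp).const_mul _)
  have hr' : HasDerivAt (fun s => tpReduced₂ M k α ψ Ψ t s ϑ φ) _ r :=
    ((((hΨ.opL hrp).hasDerivAt_dR hp).neg.add
      ((hasDerivAt_const_div (6 * M) hr0).ofReal_comp.mul (hψ.hasDerivAt_dR hp))).sub
      (hψ.angP.hasDerivAt_dR hp)).sub ((hα.hasDerivAt_dR hp).const_mul _)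
  rw [opLb_eq_of_hasDerivAt ht hr']
  simp only [opLb, wmul, RWp] at hLbL hLbA hLbψ hLbα ⊢
  linear_combination hLbL + ((6 * M / r : ℝ) : ℂ) * hLbψ - hLbA - 6 * M * hLbα
    - ψ t r ϑ φ * hm

lemma wmul_winv (hrp : 0 < rp) (hroot : rp + k ^ 2 * rp ^ 3 - 2 * M = 0) (u : F4) :
    EqOnOm rp (wmul M k (winv M k u)) u := fun t r ϑ φ hp => by
  have : ((ww M k r : ℝ) : ℂ) ≠ 0 := by exact_mod_cast (ww_pos hrp hroot hp.1).ne'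
  simp only [wmul, winv, mul_inv_cancel_left₀ this]

lemma winv_eqOn_of_eq_wmul (hrp : 0 < rp) (hroot : rp + k ^ 2 * rp ^ 3 - 2 * M = 0)
    (h : EqOnOm rp f (wmul M k g)) : EqOnOm rp (winv M k f) g := fun t r ϑ φ hp => by
  have : ((ww M k r : ℝ) : ℂ) ≠ 0 := by exact_mod_cast (ww_pos hrp hroot hp.1).ne'
  simp only [winv, h t r ϑ φ hp, wmul, inv_mul_cancel_left₀ this]

theorem RWp_eqOn_of_Tp_eqOn (hrp : 0 < rp) (hroot : rp + k ^ 2 * rp ^ 3 - 2 * M = 0)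
    {α F : F4} (hα : SmoothOnOm rp α) (hT : EqOnOm rp (Tp M k α) F) :
    EqOnOm rp (RWp M k (winv M k (opLb M k (winv M k (opLb M k α)))))
      (opLb M k (winv M k (opLb M k (winv M k F)))) := by
  set ψ := winv M k (opLb M k α)
  set Ψ := winv M k (opLb M k ψ)
  have hψ : SmoothOnOm rp ψ := (hα.opLb hrp).winv hrp hroot
  have hΨ : SmoothOnOm rp Ψ := (hψ.opLb hrp).winv hrp hroot
  have hαψ : EqOnOm rp (opLb M k α) (wmul M k ψ) := fun t r ϑ φ hp =>
    (wmul_winv hrp hroot _ t r ϑ φ hp).symm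
  have hψΨ : EqOnOm rp (opLb M k ψ) (wmul M k Ψ) := fun t r ϑ φ hp =>
    (wmul_winv hrp hroot _ t r ϑ φ hp).symm
  have h₁ : EqOnOm rp (winv M k F) (tpReduced₁ M k α ψ) :=
    winv_eqOn_of_eq_wmul hrp hroot fun t r ϑ φ hp =>
      (hT t r ϑ φ hp).symm.trans (Tp_eq_wmul_tpReduced₁ hrp hroot hψ hαψ hp)
  have h₂ : EqOnOm rp (winv M k (opLb M k (winv M k F))) (tpReduced₂ M k α ψ Ψ) :=
    winv_eqOn_of_eq_wmul hrp hroot fun t r ϑ φ hp =>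
      (opLb_congr h₁ hp).trans (opLb_tpReduced₁ hrp hroot hα hψ hΨ hαψ hψΨ hp)
  intro t r ϑ φ hp
  rw [opLb_congr h₂ hp, opLb_tpReduced₂ hrp hα hψ hΨ hαψ hψΨ hp]

def reflect (u : F4) : F4 := fun t r ϑ φ => u (-t) r ϑ (-φ)

@[simp]
lemma reflect_reflect (u : F4) : reflect (reflect u) = u := by
  ext; simp [reflect]

lemma SmoothOnOm.reflect (hu : SmoothOnOm rp u) : SmoothOnOm rp (reflect u) :=
  hu.comp (f := fun p : ℝ × ℝ × ℝ × ℝ => (-p.1, p.2.1, p.2.2.1, -p.2.2.2))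
    (by fun_prop) fun _ hp => hp

lemma dT_reflect (u : F4) : dT (reflect u) = -reflect (dT u) := by
  ext t r ϑ φ; exact deriv_comp_neg (fun s => u s r ϑ (-φ)) t

lemma dTh_reflect (u : F4) : dTh (reflect u) = reflect (dTh u) := rfl

lemma dPh_reflect (u : F4) : dPh (reflect u) = -reflect (dPh u) := by
  ext t r ϑ φ; exact deriv_comp_neg (fun s => u (-t) r ϑ s) φ

lemma dT_neg (u : F4) : dT (-u) = -dT u := by
  ext; simp [dT]

lemma dR_neg (u : F4) : dR (-u) = -dR u := by
  ext; simp [dR]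

lemma dPh_neg (u : F4) : dPh (-u) = -dPh u := by
  ext; simp [dPh]

lemma opL_neg (u : F4) : opL M k (-u) = -opL M k u := by
  ext; simp [opL, dT_neg, dR_neg]; ring

lemma winv_neg (u : F4) : winv M k (-u) = -winv M k u := by
  ext; simp [winv]

lemma opL_reflect (u : F4) : opL M k (reflect u) = -reflect (opLb M k u) := by
  ext; simp [opL, opLb, dT_reflect, reflect, dR]; ring

lemma opLb_reflect (u : F4) : opLb M k (reflect u) = -reflect (opL M k u) := by
  ext; simp [opL, opLb, dT_reflect, reflect, dR]; ring

lemma winv_reflect (u : F4) : winv M k (reflect u) = reflect (winv M k u) := rfl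

lemma angM_reflect (u : F4) : angM (reflect u) = reflect (angP u) := by
  ext t r ϑ φ
  simp only [angM, angP, dTh_reflect, dPh_reflect, dPh_neg, reflect, Pi.neg_apply, neg_neg]
  ring

lemma Tm_reflect (hrp : 0 < rp) (hu : SmoothOnOm rp u) (hp : (t, r, ϑ, φ) ∈ OmSet rp) :
    Tm M k (reflect u) t r ϑ φ = Tp M k u (-t) r ϑ (-φ) := by
  have hcomm := opL_opLb_comm (M := M) (k := k) hrp hu (t := -t) (φ := -φ) hp
  simp only [Tm, Tp, opLb_reflect, opL_neg, opL_reflect, angM_reflect, reflect, Pi.neg_apply,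
    neg_neg, hcomm]
  ring

lemma RWm_reflect (hrp : 0 < rp) (hu : SmoothOnOm rp u) (hp : (t, r, ϑ, φ) ∈ OmSet rp) :
    RWm M k (reflect u) t r ϑ φ = RWp M k u (-t) r ϑ (-φ) := by
  have hcomm := opL_opLb_comm (M := M) (k := k) hrp hu (t := -t) (φ := -φ) hp
  simp only [RWm, RWp, opLb_reflect, opL_neg, opL_reflect, angM_reflect, reflect, Pi.neg_apply,
    neg_neg, hcomm]

lemma opL_winv_opL_winv_reflect (u : F4) :
    opL M k (winv M k (opL M k (winv M k (reflect u))))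
      = reflect (opLb M k (winv M k (opLb M k (winv M k u)))) := by
  simp only [opL_reflect, winv_neg, winv_reflect, opL_neg, neg_neg]

lemma winv_opL_winv_opL_reflect (u : F4) :
    winv M k (opL M k (winv M k (opL M k (reflect u))))
      = reflect (winv M k (opLb M k (winv M k (opLb M k u)))) := by
  simp only [opL_reflect, winv_neg, winv_reflect, opL_neg, neg_neg]

theorem RWm_eqOn_of_Tm_eqOn (hrp : 0 < rp) (hroot : rp + k ^ 2 * rp ^ 3 - 2 * M = 0)
    {α F : F4} (hα : SmoothOnOm rp α) (hT : EqOnOm rp (Tm M k α) F) :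
    EqOnOm rp (RWm M k (winv M k (opL M k (winv M k (opL M k α)))))
      (opL M k (winv M k (opL M k (winv M k F)))) := by
  obtain ⟨β, rfl⟩ : ∃ β, α = reflect β := ⟨reflect α, (reflect_reflect α).symm⟩
  have hβ : SmoothOnOm rp β := by simpa using hα.reflect
  have hTβ : EqOnOm rp (Tp M k β) (reflect F) := fun t r ϑ φ hp => by
    have h := (Tm_reflect hrp hβ (t := -t) (φ := -φ) hp).symm.trans (hT (-t) r ϑ (-φ) hp)
    rwa [neg_neg, neg_neg] at h
  have hβΨ : SmoothOnOm rp (winv M k (opLb M k (winv M k (opLb M k β)))) :=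
    (((hβ.opLb hrp).winv hrp hroot).opLb hrp).winv hrp hroot
  intro t r ϑ φ hp
  rw [winv_opL_winv_opL_reflect, RWm_reflect hrp hβΨ hp, ← reflect_reflect F,
    opL_winv_opL_winv_reflect]
  exact RWp_eqOn_of_Tp_eqOn hrp hroot hβ hTβ (-t) r ϑ (-φ) hp

lemma winv_zero : winv M k 0 = 0 := by
  ext; simp [winv]

lemma opL_zero : opL M k 0 = 0 := by
  ext; simp [opL, dT, dR]

lemma opLb_zero : opLb M k 0 = 0 := by
  ext; simp [opLb, dT, dR]

theorem statement3_general
    (M k rp : ℝ) (hrp : 0 < rp)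
    (hroot : rp + k ^ 2 * rp ^ 3 - 2 * M = 0)
    (αp αm Fp Fm : F4)
    (hαp : SmoothOnOm rp αp) (hαm : SmoothOnOm rp αm)
    (hTp : ∀ t r ϑ φ : ℝ, (t, r, ϑ, φ) ∈ OmSet rp → Tp M k αp t r ϑ φ = Fp t r ϑ φ)
    (hTm : ∀ t r ϑ φ : ℝ, (t, r, ϑ, φ) ∈ OmSet rp → Tm M k αm t r ϑ φ = Fm t r ϑ φ)
    (ψp Ψp ψm Ψm : F4)
    (hψp : ψp = winv M k (opLb M k αp))
    (hΨp : Ψp = winv M k (opLb M k ψp))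
    (hψm : ψm = winv M k (opL M k αm))
    (hΨm : Ψm = winv M k (opL M k ψm)) :
    (∀ t r ϑ φ : ℝ, (t, r, ϑ, φ) ∈ OmSet rp →
      RWp M k Ψp t r ϑ φ = opLb M k (winv M k (opLb M k (winv M k Fp))) t r ϑ φ
      ∧
      RWm M k Ψm t r ϑ φ = opL M k (winv M k (opL M k (winv M k Fm))) t r ϑ φ)
    ∧
    ((∀ t r ϑ φ : ℝ, (t, r, ϑ, φ) ∈ OmSet rp → Fp t r ϑ φ = 0 ∧ Fm t r ϑ φ = 0) →
      ∀ t r ϑ φ : ℝ, (t, r, ϑ, φ) ∈ OmSet rp →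
        RWp M k Ψp t r ϑ φ = 0 ∧ RWm M k Ψm t r ϑ φ = 0) := by
  subst hψp hΨp hψm hΨm
  refine ⟨fun t r ϑ φ hp => ⟨RWp_eqOn_of_Tp_eqOn hrp hroot hαp hTp t r ϑ φ hp,
    RWm_eqOn_of_Tm_eqOn hrp hroot hαm hTm t r ϑ φ hp⟩, fun hF t r ϑ φ hp => ⟨?_, ?_⟩⟩
  · simpa [winv_zero, opLb_zero] using RWp_eqOn_of_Tp_eqOn hrp hroot hαp (F := 0)
      (fun t r ϑ φ hq => (hTp t r ϑ φ hq).trans (hF t r ϑ φ hq).1) t r ϑ φ hp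
  · simpa [winv_zero, opL_zero] using RWm_eqOn_of_Tm_eqOn hrp hroot hαm (F := 0)
      (fun t r ϑ φ hq => (hTm t r ϑ φ hq).trans (hF t r ϑ φ hq).2) t r ϑ φ hp

/-- If `𝔗⁽±²⁾α̃⁽±²⁾ = F⁽±²⁾`, then the Chandrasekhar transformations
`Ψ⁽±²⁾` satisfy the inhomogeneous Regge–Wheeler equations
`𝕽⁽⁺²⁾Ψ⁽⁺²⁾ = L̲(w⁻¹L̲(w⁻¹F⁽⁺²⁾))`, `𝕽⁽⁻²⁾Ψ⁽⁻²⁾ = L(w⁻¹L(w⁻¹F⁽⁻²⁾))` on `Ω`;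
in particular if `F⁽±²⁾ = 0` on `Ω` then `𝕽⁽±²⁾Ψ⁽±²⁾ = 0` on `Ω`. -/
theorem statement3
    (M k rp : ℝ) (hM : 0 < M) (hk : 0 < k) (hrp : 0 < rp)
    (hroot : rp + k ^ 2 * rp ^ 3 - 2 * M = 0)
    (αp αm Fp Fm : F4)
    (hαp : SmoothOnOm rp αp) (hαm : SmoothOnOm rp αm)
    (hFp : SmoothOnOm rp Fp) (hFm : SmoothOnOm rp Fm)
    (hTp : ∀ t r ϑ φ : ℝ, (t, r, ϑ, φ) ∈ OmSet rp → Tp M k αp t r ϑ φ = Fp t r ϑ φ)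
    (hTm : ∀ t r ϑ φ : ℝ, (t, r, ϑ, φ) ∈ OmSet rp → Tm M k αm t r ϑ φ = Fm t r ϑ φ)
    (ψp Ψp ψm Ψm : F4)
    (hψp : ψp = winv M k (opLb M k αp))
    (hΨp : Ψp = winv M k (opLb M k ψp))
    (hψm : ψm = winv M k (opL M k αm))
    (hΨm : Ψm = winv M k (opL M k ψm)) :
    (∀ t r ϑ φ : ℝ, (t, r, ϑ, φ) ∈ OmSet rp →
      RWp M k Ψp t r ϑ φ = opLb M k (winv M k (opLb M k (winv M k Fp))) t r ϑ φ
      ∧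
      RWm M k Ψm t r ϑ φ = opL M k (winv M k (opL M k (winv M k Fm))) t r ϑ φ)
    ∧
    ((∀ t r ϑ φ : ℝ, (t, r, ϑ, φ) ∈ OmSet rp → Fp t r ϑ φ = 0 ∧ Fm t r ϑ φ = 0) →
      ∀ t r ϑ φ : ℝ, (t, r, ϑ, φ) ∈ OmSet rp →
        RWp M k Ψp t r ϑ φ = 0 ∧ RWm M k Ψm t r ϑ φ = 0) :=
  statement3_general M k rp hrp hroot αp αm Fp Fm hαp hαm hTp hTm ψp Ψp ψm Ψm hψp hΨp hψm hΨm

end Grav
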